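/- Let R be a *-reducing ring with involution and let p, q ∈ R be projections. Then the commutator pq - qp is Moore–Penrose invertible if and only if both pq and p - q are Moore–Penrose invertible. -/
import Mathlib


/-- `b` is a Moore–Penrose inverse of `a`. -/
def IsMPInv {R : Type*} [Ring R] [StarRing R] (a b : R) : Prop :=
  a * b * a = a ∧ b * a * b = b ∧ star (a * b) = a * b ∧ star (b * a) = b * a

/-- `a` is Moore–Penrose invertible. -/
def IsMPInvertible {R : Type*} [Ring R] [StarRing R] (a : R) : Prop :=
  ∃ b, IsMPInv a b

/-- A projection: a self-adjoint idempotent. -/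
def IsProjection {R : Type*} [Ring R] [StarRing R] (p : R) : Prop :=
  p * p = p ∧ star p = p

/-- A `*`-reducing ring: `a* a = 0` implies `a = 0`. -/
def IsStarReducing (R : Type*) [Ring R] [StarRing R] : Prop :=
  ∀ a : R, star a * a = 0 → a = 0

section MPLemmas
variable {R : Type*} [Ring R] [StarRing R]

lemma mp_star {a b : R} (h : IsMPInv a b) : IsMPInv (star a) (star b) := by
  obtain ⟨h1, h2, h3, h4⟩ := h
  refine ⟨?_, ?_, ?_, ?_⟩
  · calc star a * star b * star a = star (a * (b * a)) := by simp [star_mul, star_star, mul_assoc]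
    _ = star a := by rw [← mul_assoc, h1]
  · calc star b * star a * star b = star (b * (a * b)) := by simp [star_mul, star_star, mul_assoc]
    _ = star b := by rw [← mul_assoc, h2]
  · have e : star a * star b = b * a := by rw [← star_mul, h4]
    rw [e]; exact h4
  · have e : star b * star a = a * b := by rw [← star_mul, h3]
    rw [e]; exact h3

lemma mp_unique {a b c : R} (hb : IsMPInv a b) (hc : IsMPInv a c) : b = c := by
  obtain ⟨b1, b2, b3, b4⟩ := hb
  obtain ⟨c1, c2, c3, c4⟩ := hc
  -- a * b = a * c
  have hab : a * b = a * c := by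
    have e1 : (a * b) * (a * c) = a * c := by
      rw [show (a * b) * (a * c) = (a * b * a) * c by noncomm_ring, b1]
    have e2 : (a * b) * (a * c) = a * b := by
      calc (a * b) * (a * c) = star (a * b) * star (a * c) := by rw [b3, c3]
        _ = star ((a * c) * (a * b)) := (star_mul _ _).symm
        _ = star ((a * c * a) * b) := by noncomm_ring
        _ = star (a * b) := by rw [c1]
        _ = a * b := b3
    rw [← e2, e1]
  have hba : b * a = c * a := by
    have e1 : (c * a) * (b * a) = c * a := by
      rw [show (c * a) * (b * a) = c * (a * b * a) by noncomm_ring, b1]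
    have e2 : (c * a) * (b * a) = b * a := by
      calc (c * a) * (b * a) = star (c * a) * star (b * a) := by rw [b4, c4]
        _ = star ((b * a) * (c * a)) := (star_mul _ _).symm
        _ = star (b * (a * c * a)) := by noncomm_ring
        _ = star (b * a) := by rw [c1]
        _ = b * a := b4
    rw [← e2, e1]
  calc b = b * a * b := b2.symm
    _ = b * (a * c) := by rw [mul_assoc, hab]
    _ = (b * a) * c := by rw [mul_assoc]
    _ = (c * a) * c := by rw [hba]
    _ = c := c2


lemma mpi_star {a : R} : IsMPInvertible a ↔ IsMPInvertible (star a) := by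
  constructor
  · rintro ⟨b, hb⟩; exact ⟨star b, mp_star hb⟩
  · rintro ⟨b, hb⟩; exact ⟨star b, by simpa using mp_star hb⟩

/-- For self-adjoint `a`, the MP inverse is self-adjoint and commutes with `a`. -/
lemma mp_sa {a b : R} (ha : star a = a) (hb : IsMPInv a b) :
    star b = b ∧ a * b = b * a := by
  have h' : IsMPInv a (star b) := by have := mp_star hb; rwa [ha] at this
  have hsb : star b = b := mp_unique h' hb
  refine ⟨hsb, ?_⟩
  calc a * b = star (a * b) := hb.2.2.1.symm
    _ = star b * star a := star_mul _ _
    _ = b * a := by rw [hsb, ha]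

/-- Double commutant property: anything commuting with `a` and `star a`
commutes with any MP inverse of `a`. -/
lemma mp_comm {a b c : R} (hb : IsMPInv a b) (h1 : c * a = a * c)
    (h2 : c * star a = star a * c) : c * b = b * c := by
  obtain ⟨e1, e2, e3, e4⟩ := hb
  have h2' : a * star c = star c * a := by
    have := congrArg star h2
    simpa [star_mul, star_star] using this
  -- c * a = a*b*c*a
  have i1 : c * a = a * b * (c * a) := by
    calc c * a = a * c := h1
      _ = (a * b * a) * c := by rw [e1]
      _ = a * b * (a * c) := by noncomm_ring
      _ = a * b * (c * a) := by rw [h1]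
  -- star c * a = a*b*(star c*a)
  have i2 : star c * a = a * b * (star c * a) := by
    calc star c * a = a * star c := h2'.symm
      _ = (a * b * a) * star c := by rw [e1]
      _ = a * b * (a * star c) := by noncomm_ring
      _ = a * b * (star c * a) := by rw [h2']
  -- hu : c * (a*b) = (a*b) * c
  have hu : c * (a * b) = a * b * c := by
    have j1 : c * (a * b) = a * b * (c * (a * b)) := by
      calc c * (a * b) = (c * a) * b := by rw [mul_assoc]
        _ = (a * b * (c * a)) * b := by rw [← i1]
        _ = a * b * (c * (a * b)) := by noncomm_ring
    have j2 : star c * (a * b) = a * b * (star c * (a * b)) := by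
      calc star c * (a * b) = (star c * a) * b := by rw [mul_assoc]
        _ = (a * b * (star c * a)) * b := by rw [← i2]
        _ = a * b * (star c * (a * b)) := by noncomm_ring
    -- star of j2 gives: (a*b)*c = (a*b)*c*(a*b)
    have j3 : a * b * c = a * b * c * (a * b) := by
      have := congrArg star j2
      simp only [star_mul, star_star, e3] at this
      -- this : (a*b) * c = ((a*b) * c) * (a*b)  (after massaging)
      calc a * b * c = star (star c * (a * b)) := by
            rw [star_mul, e3, star_star]
        _ = star (a * b * (star c * (a * b))) := by rw [← j2]
        _ = star (star c * (a*b)) * star (a * b) := by rw [star_mul]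
        _ = (star (star c * (a*b))) * (a * b) := by rw [e3]
        _ = (a * b * c) * (a * b) := by rw [star_mul, e3, star_star]
    calc c * (a * b) = a * b * (c * (a * b)) := j1
      _ = (a * b * c) * (a * b) := by noncomm_ring
      _ = a * b * c := j3.symm
  -- hv : c * (b*a) = (b*a) * c
  have hv : c * (b * a) = b * a * c := by
    have k1 : a * c = (a * c) * (b * a) := by
      calc a * c = c * a := h1.symm
        _ = c * (a * b * a) := by rw [e1]
        _ = (c * a) * (b * a) := by noncomm_ring
        _ = (a * c) * (b * a) := by rw [h1]
    have k2 : a * star c = (a * star c) * (b * a) := by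
      calc a * star c = star c * a := h2'
        _ = star c * (a * b * a) := by rw [e1]
        _ = (star c * a) * (b * a) := by noncomm_ring
        _ = (a * star c) * (b * a) := by rw [h2']
    have k3 : c * (b * a) = (b * a) * (c * (b * a)) := by
      have := congrArg star k2
      simp only [star_mul, star_star, e4] at this
      -- this : c * star a = (c * star a) ... massaging manually below
      calc c * (b * a) = c * star (b * a) := by rw [e4]
        _ = star ((b * a) * star c) := by simp [star_mul, star_star, mul_assoc]
        _ = star (b * (a * star c)) := by rw [mul_assoc]
        _ = star (b * ((a * star c) * (b * a))) := by rw [← k2]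
        _ = star ((b * a) * (star c * (b * a))) := by noncomm_ring
        _ = star (star c * (b * a)) * star (b * a) := star_mul _ _
        _ = (star (b * a) * c) * star (b * a) := by simp [star_mul, star_star, mul_assoc]
        _ = ((b * a) * c) * (b * a) := by rw [e4]
        _ = (b * a) * (c * (b * a)) := by noncomm_ring
    have k4 : (b * a) * c = (b * a) * c * (b * a) := by
      calc (b * a) * c = b * (a * c) := by rw [mul_assoc]
        _ = b * ((a * c) * (b * a)) := by rw [← k1]
        _ = ((b * a) * c) * (b * a) := by noncomm_ring
    calc c * (b * a) = (b * a) * (c * (b * a)) := k3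
      _ = (b * a) * c * (b * a) := by noncomm_ring
      _ = (b * a) * c := k4.symm
  -- final: cb = b*a*c*b = b*(acba)*b ... 
  have hacba : a * c = a * c * (b * a) := by
    calc a * c = c * a := h1.symm
      _ = c * (a * b * a) := by rw [e1]
      _ = (c * a) * (b * a) := by noncomm_ring
      _ = (a * c) * (b * a) := by rw [h1]
  have step1 : c * b = b * a * c * b := by
    calc c * b = c * (b * a * b) := by rw [e2]
      _ = (c * (b * a)) * b := by noncomm_ring
      _ = (b * a * c) * b := by rw [hv]
      _ = b * a * c * b := by noncomm_ring
  have step2 : b * a * c * b = b * c * (a * b) := by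
    calc b * a * c * b = b * ((a * c) * b) := by noncomm_ring
      _ = b * ((a * c * (b * a)) * b) := by rw [← hacba]
      _ = b * ((a * c) * (b * (a * b))) := by noncomm_ring
      _ = b * ((c * a) * (b * (a * b))) := by rw [h1]
      _ = b * (c * (a * b * (a * b))) := by noncomm_ring
      _ = b * (c * ((a * b * a) * b)) := by noncomm_ring
      _ = b * (c * (a * b)) := by rw [e1]
      _ = b * c * (a * b) := by noncomm_ring
  have step3 : b * c * (a * b) = b * c := by
    calc b * c * (a * b) = b * (c * (a * b)) := by noncomm_ring
      _ = b * (a * b * c) := by rw [hu]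
      _ = (b * a * b) * c := by noncomm_ring
      _ = b * c := by rw [e2]
  rw [step1, step2, step3]


/-- Forward: if `a` is MP invertible then so is `star a * a`. -/
lemma mp_fwd {a b : R} (hb : IsMPInv a b) : IsMPInv (star a * a) (b * star b) := by
  obtain ⟨e1, e2, e3, e4⟩ := hb
  have hba : star a * star b = b * a := by rw [← star_mul, e4]
  have hab : star b * star a = a * b := by rw [← star_mul, e3]
  have hX : star a * a * (b * star b) = b * a := by
    calc star a * a * (b * star b) = star a * (a * b) * star b := by noncomm_ring
      _ = star a * star (a * b) * star b := by rw [e3]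
      _ = star a * (star b * star a) * star b := by rw [star_mul]
      _ = (star a * star b) * (star a * star b) := by noncomm_ring
      _ = (b * a) * (b * a) := by rw [hba]
      _ = (b * a * b) * a := by noncomm_ring
      _ = b * a := by rw [e2]
  have hY : (b * star b) * (star a * a) = b * a := by
    have : star ((b * star b) * (star a * a)) = star a * a * (b * star b) := by
      simp [star_mul, star_star, mul_assoc]
    calc (b * star b) * (star a * a)
        = star (star ((b * star b) * (star a * a))) := (star_star _).symm
      _ = star (star a * a * (b * star b)) := by rw [this]
      _ = star (b * a) := by rw [hX]
      _ = b * a := e4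
  refine ⟨?_, ?_, ?_, ?_⟩
  · calc star a * a * (b * star b) * (star a * a) = (b * a) * (star a * a) := by rw [hX]
      _ = (star a * star b) * (star a * a) := by rw [hba]
      _ = star a * ((star b * star a) * a) := by noncomm_ring
      _ = star a * ((a * b) * a) := by rw [hab]
      _ = star a * a := by rw [e1]
  · calc b * star b * (star a * a) * (b * star b) = (b * a) * (b * star b) := by rw [hY]
      _ = (b * a * b) * star b := by noncomm_ring
      _ = b * star b := by rw [e2]
  · rw [hX]; exact e4
  · rw [hY]; exact e4
/-- Backward: in a `*`-reducing ring, MP invertibility of `star a * a` gives that of `a`. -/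
lemma mp_bwd {a : R} (hR : IsStarReducing R) (h : IsMPInvertible (star a * a)) :
    IsMPInvertible a := by
  obtain ⟨c, hc⟩ := h
  have hdsa : star (star a * a) = star a * a := by
    simp [star_mul, star_star, mul_assoc]
  obtain ⟨hcs, hcd⟩ := mp_sa hdsa hc
  obtain ⟨e1, e2, e3, e4⟩ := hc
  have hy : star (a * c * (star a * a) - a) * (a * c * (star a * a) - a) = 0 := by
    have hst : star (a * c * (star a * a) - a) = star a * a * c * star a - star a := by
      simp [star_sub, star_mul, star_star, hcs, mul_assoc]
    rw [hst]
    calc (star a * a * c * star a - star a) * (a * c * (star a * a) - a)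
        = (star a * a * c * (star a * a)) * (c * (star a * a))
          - (star a * a * c * (star a * a)) - (star a * a * c * (star a * a))
          + star a * a := by noncomm_ring
      _ = (star a * a) * (c * (star a * a)) - (star a * a) - (star a * a)
          + star a * a := by rw [e1]
      _ = (star a * a * c * (star a * a)) - (star a * a) - (star a * a)
          + star a * a := by noncomm_ring
      _ = (star a * a) - (star a * a) - (star a * a) + star a * a := by rw [e1]
      _ = 0 := by abel
  have key : a * c * (star a * a) = a := by
    have := hR _ hy
    exact sub_eq_zero.mp this
  refine ⟨c * star a, ?_, ?_, ?_, ?_⟩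
  · calc a * (c * star a) * a = a * c * (star a * a) := by noncomm_ring
      _ = a := key
  · calc (c * star a) * a * (c * star a) = (c * (star a * a) * c) * star a := by
          noncomm_ring
      _ = c * star a := by rw [e2]
  · have : a * (c * star a) = star (a * (c * star a)) := by
      simp [star_mul, star_star, hcs, mul_assoc]
    exact this.symm
  · have h' : (c * star a) * a = c * (star a * a) := by rw [mul_assoc]
    rw [h']; exact e4


/-- Product of commuting self-adjoint MP invertible elements is MP invertible. -/
lemma mp_prod {y z : R} (hy : star y = y) (hz : star z = z) (hcomm : y * z = z * y)
    (hY : IsMPInvertible y) (hZ : IsMPInvertible z) : IsMPInvertible (y * z) := by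
  obtain ⟨k, hk⟩ := hY
  obtain ⟨m, hm⟩ := hZ
  obtain ⟨hks, hky⟩ := mp_sa hy hk
  obtain ⟨hms, hmz⟩ := mp_sa hz hm
  have hym : y * m = m * y := mp_comm hm hcomm (by rw [hz]; exact hcomm)
  have hzk : z * k = k * z := mp_comm hk hcomm.symm (by rw [hy]; exact hcomm.symm)
  have hmk : m * k = k * m := mp_comm hk hym.symm (by rw [hy]; exact hym.symm)
  have e : y * z * (k * m) = (y * k) * (z * m) := by
    calc y * z * (k * m) = y * (z * k) * m := by noncomm_ring
      _ = y * (k * z) * m := by rw [hzk]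
      _ = (y * k) * (z * m) := by noncomm_ring
  have e2 : k * m * (y * z) = (k * y) * (m * z) := by
    calc k * m * (y * z) = k * (m * y) * z := by noncomm_ring
      _ = k * (y * m) * z := by rw [← hym]
      _ = (k * y) * (m * z) := by noncomm_ring
  refine ⟨k * m, ?_, ?_, ?_, ?_⟩
  · calc y * z * (k * m) * (y * z) = (y * k) * (z * m) * (y * z) := by rw [e]
      _ = y * k * (z * (m * y)) * z := by noncomm_ring
      _ = y * k * (z * (y * m)) * z := by rw [← hym]
      _ = y * k * ((z * y) * (m * z)) := by noncomm_ring
      _ = y * k * ((y * z) * (m * z)) := by rw [← hcomm]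
      _ = (y * k * y) * (z * (m * z)) := by noncomm_ring
      _ = y * (z * (m * z)) := by rw [hk.1]
      _ = y * (z * m * z) := by noncomm_ring
      _ = y * z := by rw [hm.1]
  · calc k * m * (y * z) * (k * m) = (k * y) * (m * z) * (k * m) := by rw [e2]
      _ = k * y * (m * (z * k)) * m := by noncomm_ring
      _ = k * y * (m * (k * z)) * m := by rw [hzk]
      _ = k * y * ((m * k) * (z * m)) := by noncomm_ring
      _ = k * y * ((k * m) * (z * m)) := by rw [hmk]
      _ = (k * y * k) * (m * (z * m)) := by noncomm_ring
      _ = k * (m * (z * m)) := by rw [hk.2.1]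
      _ = k * (m * z * m) := by noncomm_ring
      _ = k * m := by rw [hm.2.1]
  · rw [e, star_mul, hk.2.2.1, hm.2.2.1]
    calc z * m * (y * k) = z * ((m * y) * k) := by noncomm_ring
      _ = z * ((y * m) * k) := by rw [← hym]
      _ = (z * y) * (m * k) := by noncomm_ring
      _ = (y * z) * (k * m) := by rw [← hcomm, hmk]
      _ = (y * k) * (z * m) := e
  · rw [e2, star_mul, hk.2.2.2, hm.2.2.2]
    calc m * z * (k * y) = m * ((z * k) * y) := by noncomm_ring
      _ = m * ((k * z) * y) := by rw [hzk]
      _ = (m * k) * (z * y) := by noncomm_ring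
      _ = (k * m) * (y * z) := by rw [hmk, ← hcomm]
      _ = (k * y) * (m * z) := e2

/-- Factor extraction: if `r` is self-adjoint, `r*p = r` for a projection `p`, and
`r - r*r` is MP invertible, then `r` is MP invertible. -/
lemma mp_factor {p r : R} (hpp : p * p = p) (hps : star p = p) (hr : star r = r)
    (hrp : r * p = r) (hz : IsMPInvertible (r - r * r)) : IsMPInvertible r := by
  obtain ⟨h, hh⟩ := hz
  have hzs : star (r - r * r) = r - r * r := by simp [star_sub, star_mul, hr]
  obtain ⟨hhs, hzh⟩ := mp_sa hzs hh
  have hpr : p * r = r := by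
    have := congrArg star hrp
    simpa [star_mul, hr, hps] using this
  have hrz : r * (r - r * r) = (r - r * r) * r := by noncomm_ring
  have hrh : r * h = h * r := mp_comm hh hrz (by rw [hzs]; exact hrz)
  have hpz : p * (r - r * r) = (r - r * r) * p := by
    have h1 : p * (r - r * r) = r - r * r := by
      rw [mul_sub, hpr, ← mul_assoc, hpr]
    have h2 : (r - r * r) * p = r - r * r := by
      rw [sub_mul, hrp, mul_assoc, hrp]
    rw [h1, h2]
  have hph : p * h = h * p := mp_comm hh hpz (by rw [hzs]; exact hpz)
  obtain ⟨z, hzdef⟩ : ∃ x : R, x = r - r * r := ⟨_, rfl⟩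
  rw [← hzdef] at hh hzs hzh hrz hpz
  obtain ⟨c1, c2, c3, c4⟩ := hh
  obtain ⟨U, hU⟩ : ∃ x : R, x = z * h := ⟨_, rfl⟩
  rw [← hU] at c1 c3
  -- c1 : U * z = z, c2 : h * z * h = h, c3 : star U = U
  have hUr : U * r = r * U := by
    calc U * r = z * (h * r) := by rw [hU, mul_assoc]
      _ = z * (r * h) := by rw [hrh]
      _ = (z * r) * h := by rw [← mul_assoc]
      _ = (r * z) * h := by rw [← hrz]
      _ = r * U := by rw [hU, mul_assoc]
  have hUU : U * U = U := by
    calc U * U = U * (z * h) := by nth_rewrite 2 [hU]; rfl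
      _ = (U * z) * h := by rw [← mul_assoc]
      _ = z * h := by rw [c1]
      _ = U := hU.symm
  have hzU : z * U = z := by
    calc z * U = z * (h * z) := by rw [hU, hzh]
      _ = (z * h) * z := by rw [← mul_assoc]
      _ = U * z := by rw [← hU]
      _ = z := c1
  have hUh : U * h = h := by
    calc U * h = (h * z) * h := by rw [hU, hzh]
      _ = h := c2
  have hpU : p * U = U * p := by
    calc p * U = (p * z) * h := by rw [hU, mul_assoc]
      _ = (z * p) * h := by rw [hpz]
      _ = z * (h * p) := by rw [mul_assoc, ← hph]
      _ = (z * h) * p := by rw [← mul_assoc]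
      _ = U * p := by rw [← hU]
  have hzUe : (r - r * r) * U = r - r * r := by
    rw [← hzdef]; exact hzU
  have hstar : r * r - r * r * U = r - r * U := by
    have e : r * U - r * r * U = r - r * r := by rw [← sub_mul]; exact hzUe
    have h0 : (r * r - r * r * U) - (r - r * U) = (r * U - r * r * U) - (r - r * r) := by
      abel
    rw [e, sub_self] at h0
    exact sub_eq_zero.mp h0
  obtain ⟨T, hT⟩ : ∃ x : R, x = r - r * U := ⟨_, rfl⟩
  have hrT : r * T = T := by
    calc r * T = r * r - r * (r * U) := by rw [hT, mul_sub]
      _ = r * r - r * r * U := by rw [← mul_assoc]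
      _ = T := by rw [hstar, hT]
  have hTr : T * r = T := by
    calc T * r = r * r - r * U * r := by rw [hT, sub_mul]
      _ = r * r - r * (U * r) := by rw [mul_assoc]
      _ = r * r - r * (r * U) := by rw [hUr]
      _ = r * r - r * r * U := by rw [← mul_assoc]
      _ = T := by rw [hstar, hT]
  have hUT : U * T = 0 := by
    calc U * T = U * r - U * (r * U) := by rw [hT, mul_sub]
      _ = U * r - (U * r) * U := by rw [← mul_assoc]
      _ = r * U - (r * U) * U := by rw [hUr]
      _ = r * U - r * (U * U) := by rw [mul_assoc]
      _ = r * U - r * U := by rw [hUU]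
      _ = 0 := sub_self _
  have hTh : T * h = 0 := by
    calc T * h = r * h - r * U * h := by rw [hT, sub_mul]
      _ = r * h - r * (U * h) := by rw [mul_assoc]
      _ = r * h - r * h := by rw [hUh]
      _ = 0 := sub_self _
  have hT2 : T * T = T := by
    calc T * T = r * T - r * (U * T) := by
          nth_rewrite 1 [hT]; rw [sub_mul, mul_assoc]
      _ = r * T - r * 0 := by rw [hUT]
      _ = r * T := by rw [mul_zero, sub_zero]
      _ = T := hrT
  have hTs : star T = T := by
    rw [hT, star_sub, hr, star_mul, c3, hr, hUr]
  have hTp : T * p = p * T := by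
    have e1 : T * p = T := by
      calc T * p = r * p - r * U * p := by rw [hT, sub_mul]
        _ = r * p - r * (U * p) := by rw [mul_assoc]
        _ = r * p - r * (p * U) := by rw [← hpU]
        _ = r * p - (r * p) * U := by rw [← mul_assoc]
        _ = r - r * U := by rw [hrp]
        _ = T := hT.symm
    have e2 : p * T = T := by
      calc p * T = p * r - p * (r * U) := by rw [hT, mul_sub]
        _ = p * r - (p * r) * U := by rw [← mul_assoc]
        _ = r - r * U := by rw [hpr]
        _ = T := hT.symm
    rw [e1, e2]
  obtain ⟨b, hb⟩ : ∃ x : R, x = (p - r) * h + T := ⟨_, rfl⟩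
  have hrb : r * b = U + T := by
    have h1 : r * ((p - r) * h) = U := by
      calc r * ((p - r) * h) = (r * (p - r)) * h := by rw [← mul_assoc]
        _ = (r * p - r * r) * h := by rw [mul_sub]
        _ = (r - r * r) * h := by rw [hrp]
        _ = z * h := by rw [← hzdef]
        _ = U := hU.symm
    calc r * b = r * ((p - r) * h) + r * T := by rw [hb, mul_add]
      _ = U + T := by rw [h1, hrT]
  have hbr : b * r = U + T := by
    have h1 : (p - r) * h * r = U := by
      calc (p - r) * h * r = (p - r) * (h * r) := by rw [mul_assoc]
        _ = (p - r) * (r * h) := by rw [hrh]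
        _ = ((p - r) * r) * h := by rw [← mul_assoc]
        _ = (p * r - r * r) * h := by rw [sub_mul]
        _ = (r - r * r) * h := by rw [hpr]
        _ = z * h := by rw [← hzdef]
        _ = U := hU.symm
    calc b * r = (p - r) * h * r + T * r := by rw [hb, add_mul]
      _ = U + T := by rw [h1, hTr]
  refine ⟨b, ?_, ?_, ?_, ?_⟩
  · calc r * b * r = (U + T) * r := by rw [hrb]
      _ = U * r + T * r := add_mul _ _ _
      _ = r * U + T := by rw [hUr, hTr]
      _ = r * U + (r - r * U) := by rw [hT]
      _ = r := by abel
  · have hUb : U * ((p - r) * h) = (p - r) * h := by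
      calc U * ((p - r) * h) = (U * (p - r)) * h := by rw [← mul_assoc]
        _ = (U * p - U * r) * h := by rw [mul_sub]
        _ = (p * U - r * U) * h := by rw [← hpU, hUr]
        _ = ((p - r) * U) * h := by rw [← sub_mul]
        _ = (p - r) * (U * h) := by rw [mul_assoc]
        _ = (p - r) * h := by rw [hUh]
    have hTb : T * ((p - r) * h) = 0 := by
      calc T * ((p - r) * h) = (T * (p - r)) * h := by rw [← mul_assoc]
        _ = (T * p - T * r) * h := by rw [mul_sub]
        _ = (p * T - r * T) * h := by rw [hTp, hTr, hrT]
        _ = ((p - r) * T) * h := by rw [← sub_mul]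
        _ = (p - r) * (T * h) := by rw [mul_assoc]
        _ = 0 := by rw [hTh, mul_zero]
    calc b * r * b = (U + T) * b := by rw [hbr]
      _ = (U + T) * ((p - r) * h) + (U + T) * T := by rw [hb, mul_add]
      _ = (U * ((p - r) * h) + T * ((p - r) * h)) + (U * T + T * T) := by
          rw [add_mul, add_mul]
      _ = ((p - r) * h + 0) + (0 + T) := by rw [hUb, hTb, hUT, hT2]
      _ = (p - r) * h + T := by abel
      _ = b := hb.symm
  · rw [hrb, star_add, c3, hTs]
  · rw [hbr, star_add, c3, hTs]


/-- Orthogonal sum: for a projection `p`, if `z1` lives in the `p`-corner and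
`z2` in the complementary corner, then `z1 + z2` is MP invertible iff both are. -/
lemma mp_orth {p z1 z2 : R} (hpp : p * p = p) (hps : star p = p)
    (h1l : p * z1 = z1) (h1r : z1 * p = z1) (h2l : p * z2 = 0) (h2r : z2 * p = 0) :
    IsMPInvertible (z1 + z2) ↔ IsMPInvertible z1 ∧ IsMPInvertible z2 := by
  have hs1l : p * star z1 = star z1 := by
    have := congrArg star h1r; simpa [star_mul, hps] using this
  have hs1r : star z1 * p = star z1 := by
    have := congrArg star h1l; simpa [star_mul, hps] using this
  have hs2l : p * star z2 = 0 := by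
    have := congrArg star h2r; simpa [star_mul, hps] using this
  have hs2r : star z2 * p = 0 := by
    have := congrArg star h2l; simpa [star_mul, hps] using this
  constructor
  · rintro ⟨b, hb⟩
    obtain ⟨z, hzd⟩ : ∃ x : R, x = z1 + z2 := ⟨_, rfl⟩
    rw [← hzd] at hb
    obtain ⟨e1, e2, e3, e4⟩ := hb
    have A : p * z = z1 := by rw [hzd, mul_add, h1l, h2l, add_zero]
    have B : z * p = z1 := by rw [hzd, add_mul, h1r, h2r, add_zero]
    have hpz : p * z = z * p := A.trans B.symm
    have hpzs : p * star z = star z * p := by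
      rw [hzd, star_add, mul_add, add_mul, hs1l, hs1r, hs2l, hs2r]
    have hpb : p * b = b * p := mp_comm ⟨e1, e2, e3, e4⟩ hpz hpzs
    have c1' : z1 * b = p * (z * b) := by rw [← A, mul_assoc]
    have c2' : b * z1 = (b * z) * p := by rw [← B, ← mul_assoc]
    have key1 : z * b * z1 = z1 := by
      calc z * b * z1 = z * b * (z * p) := by rw [B]
        _ = (z * b * z) * p := by noncomm_ring
        _ = z1 := by rw [e1, B]
    have key2 : z1 * (b * z) = z1 := by
      calc z1 * (b * z) = (p * z) * (b * z) := by rw [A]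
        _ = p * (z * b * z) := by noncomm_ring
        _ = p * z := by rw [e1]
        _ = z1 := A
    have key3 : z1 * b * z1 = z1 := by
      calc z1 * b * z1 = (p * (z * b)) * z1 := by rw [c1']
        _ = p * (z * b * z1) := by noncomm_ring
        _ = p * z1 := by rw [key1]
        _ = z1 := h1l
    have key4 : z1 * b * z = z1 := by rw [mul_assoc]; exact key2
    have pcomm : p * (z * b) = (z * b) * p := by
      have u1 : p * (z * b) = z1 * b := by rw [← mul_assoc, A]
      have u2 : (z * b) * p = z1 * b := by
        calc (z * b) * p = z * (b * p) := by rw [mul_assoc]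
          _ = z * (p * b) := by rw [← hpb]
          _ = (z * p) * b := by rw [← mul_assoc]
          _ = z1 * b := by rw [B]
      rw [u1, u2]
    have qcomm : p * (b * z) = (b * z) * p := by
      have u1 : p * (b * z) = b * z1 := by
        calc p * (b * z) = (p * b) * z := by rw [← mul_assoc]
          _ = (b * p) * z := by rw [hpb]
          _ = b * (p * z) := by rw [mul_assoc]
          _ = b * z1 := by rw [A]
      have u2 : (b * z) * p = b * z1 := by rw [← c2']
      rw [u1, u2]
    have f1 : p * (b * z1) = b * z1 := by
      calc p * (b * z1) = p * ((b * z) * p) := by rw [c2']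
        _ = (p * (b * z)) * p := by rw [← mul_assoc]
        _ = ((b * z) * p) * p := by rw [qcomm]
        _ = (b * z) * (p * p) := by rw [mul_assoc]
        _ = (b * z) * p := by rw [hpp]
        _ = b * z1 := c2'.symm
    have hzsub : z2 = z - z1 := by rw [hzd]; abel
    constructor
    · refine ⟨p * b, ?_, ?_, ?_, ?_⟩
      · calc z1 * (p * b) * z1 = (z1 * p) * b * z1 := by noncomm_ring
          _ = z1 * b * z1 := by rw [h1r]
          _ = z1 := key3
      · calc p * b * z1 * (p * b) = p * (b * z1) * (p * b) := by noncomm_ring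
          _ = (b * z1) * (p * b) := by rw [f1]
          _ = ((b * z) * p) * (p * b) := by rw [c2']
          _ = (b * z) * (p * p) * b := by noncomm_ring
          _ = (b * z) * p * b := by rw [hpp]
          _ = b * (z * p) * b := by noncomm_ring
          _ = b * z1 * b := by rw [B]
          _ = b * (p * z) * b := by rw [A]
          _ = (b * p) * (z * b) := by noncomm_ring
          _ = (p * b) * (z * b) := by rw [← hpb]
          _ = p * (b * z * b) := by noncomm_ring
          _ = p * b := by rw [e2]
      · have w : z1 * (p * b) = p * (z * b) := by
          calc z1 * (p * b) = (z1 * p) * b := by rw [← mul_assoc]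
            _ = z1 * b := by rw [h1r]
            _ = p * (z * b) := c1'
        rw [w]
        calc star (p * (z * b)) = star (z * b) * star p := star_mul _ _
          _ = (z * b) * p := by rw [e3, hps]
          _ = p * (z * b) := pcomm.symm
      · have w2 : (p * b) * z1 = p * (b * z) * p := by
          calc (p * b) * z1 = p * (b * z1) := by rw [mul_assoc]
            _ = p * ((b * z) * p) := by rw [c2']
            _ = p * (b * z) * p := by rw [← mul_assoc]
        rw [w2]
        calc star (p * (b * z) * p) = star p * star (p * (b * z)) := star_mul _ _
          _ = star p * (star (b * z) * star p) := by rw [star_mul]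
          _ = p * ((b * z) * p) := by rw [hps, e4]
          _ = p * (b * z) * p := by rw [← mul_assoc]
    · obtain ⟨b2, hb2d⟩ : ∃ x : R, x = b - p * b := ⟨_, rfl⟩
      have s1 : z2 * b2 = z2 * b := by
        rw [hb2d, mul_sub, ← mul_assoc, h2r, zero_mul, sub_zero]
      have g3 : (p * b) * z2 = 0 := by
        have u : b * z2 = b * z - b * z1 := by rw [hzsub, mul_sub]
        calc (p * b) * z2 = p * (b * z2) := by rw [mul_assoc]
          _ = p * (b * z) - p * (b * z1) := by rw [u, mul_sub]
          _ = (b * z) * p - b * z1 := by rw [qcomm, f1]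
          _ = b * z1 - b * z1 := by rw [← c2']
          _ = 0 := sub_self _
      have s2 : b2 * z2 = b * z2 := by
        rw [hb2d, sub_mul, g3, sub_zero]
      refine ⟨b2, ?_, ?_, ?_, ?_⟩
      · calc z2 * b2 * z2 = (z2 * b) * z2 := by rw [s1]
          _ = (z - z1) * b * (z - z1) := by rw [← hzsub]
          _ = z * b * z - z * b * z1 - (z1 * b * z - z1 * b * z1) := by noncomm_ring
          _ = z - z1 - (z1 - z1) := by rw [e1, key1, key4, key3]
          _ = z - z1 := by abel
          _ = z2 := hzsub.symm
      · have key5 : b * z1 * b = p * b := by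
          calc b * z1 * b = ((b * z) * p) * b := by rw [c2']
            _ = (p * (b * z)) * b := by rw [← qcomm]
            _ = p * (b * z * b) := by noncomm_ring
            _ = p * b := by rw [e2]
        calc b2 * z2 * b2 = (b * z2) * b2 := by rw [s2]
          _ = (b * z2) * b - (b * z2) * (p * b) := by rw [hb2d, mul_sub]
          _ = (b * z2) * b - b * ((z2 * p) * b) := by noncomm_ring
          _ = (b * z2) * b := by rw [h2r, zero_mul, mul_zero, sub_zero]
          _ = b * (z - z1) * b := by rw [← hzsub]
          _ = b * z * b - b * z1 * b := by noncomm_ring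
          _ = b - p * b := by rw [e2, key5]
          _ = b2 := hb2d.symm
      · have w3 : z2 * b2 = z * b - p * (z * b) := by
          rw [s1, hzsub, sub_mul, c1']
        have A1 : star (p * (z * b)) = (z * b) * p := by rw [star_mul, e3, hps]
        rw [w3, star_sub, e3, A1, ← pcomm]
      · have w4 : b2 * z2 = b * z - (b * z) * p := by
          rw [s2, hzsub, mul_sub, c2']
        have A2 : star (b * z * p) = p * (b * z) := by rw [star_mul, e4, hps]
        rw [w4, star_sub, e4, A2, qcomm]
  · rintro ⟨⟨b1, hb1⟩, ⟨b2, hb2⟩⟩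
    have hpb1 : p * b1 = b1 * p :=
      mp_comm hb1 (h1l.trans h1r.symm) (hs1l.trans hs1r.symm)
    have hpb2 : p * b2 = b2 * p :=
      mp_comm hb2 (h2l.trans h2r.symm) (hs2l.trans hs2r.symm)
    have b1p : b1 * p = b1 := by
      calc b1 * p = (b1 * z1 * b1) * p := by rw [hb1.2.1]
        _ = b1 * z1 * (b1 * p) := by noncomm_ring
        _ = b1 * z1 * (p * b1) := by rw [hpb1]
        _ = b1 * (z1 * p) * b1 := by noncomm_ring
        _ = b1 * z1 * b1 := by rw [h1r]
        _ = b1 := hb1.2.1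
    have pb1 : p * b1 = b1 := hpb1.trans b1p
    have pb2 : p * b2 = 0 := by
      calc p * b2 = p * (b2 * z2 * b2) := by rw [hb2.2.1]
        _ = (p * b2) * (z2 * b2) := by noncomm_ring
        _ = (b2 * p) * (z2 * b2) := by rw [hpb2]
        _ = b2 * (p * z2) * b2 := by noncomm_ring
        _ = 0 := by rw [h2l, mul_zero, zero_mul]
    have b2p : b2 * p = 0 := hpb2.symm.trans pb2
    have x1 : z1 * b2 = 0 := by
      calc z1 * b2 = (z1 * p) * b2 := by rw [h1r]
        _ = z1 * (p * b2) := by rw [mul_assoc]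
        _ = 0 := by rw [pb2, mul_zero]
    have x2 : z2 * b1 = 0 := by
      calc z2 * b1 = z2 * (p * b1) := by rw [pb1]
        _ = (z2 * p) * b1 := by rw [← mul_assoc]
        _ = 0 := by rw [h2r, zero_mul]
    have x3 : b1 * z2 = 0 := by
      calc b1 * z2 = (b1 * p) * z2 := by rw [b1p]
        _ = b1 * (p * z2) := by rw [mul_assoc]
        _ = 0 := by rw [h2l, mul_zero]
    have x4 : b2 * z1 = 0 := by
      calc b2 * z1 = b2 * (p * z1) := by rw [h1l]
        _ = (b2 * p) * z1 := by rw [← mul_assoc]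
        _ = 0 := by rw [b2p, zero_mul]
    have E : (z1 + z2) * (b1 + b2) = z1 * b1 + z2 * b2 := by
      calc (z1 + z2) * (b1 + b2) = (z1 * b1 + z1 * b2) + (z2 * b1 + z2 * b2) := by
            rw [add_mul, mul_add, mul_add]
        _ = z1 * b1 + z2 * b2 := by rw [x1, x2, add_zero, zero_add]
    have F : (b1 + b2) * (z1 + z2) = b1 * z1 + b2 * z2 := by
      calc (b1 + b2) * (z1 + z2) = (b1 * z1 + b1 * z2) + (b2 * z1 + b2 * z2) := by
            rw [add_mul, mul_add, mul_add]
        _ = b1 * z1 + b2 * z2 := by rw [x3, x4, add_zero, zero_add]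
    refine ⟨b1 + b2, ?_, ?_, ?_, ?_⟩
    · calc (z1 + z2) * (b1 + b2) * (z1 + z2) = (z1 * b1 + z2 * b2) * (z1 + z2) := by
            rw [E]
        _ = (z1 * b1 * z1 + z1 * (b1 * z2)) + (z2 * (b2 * z1) + z2 * b2 * z2) := by
            rw [add_mul, mul_add, mul_add]; noncomm_ring
        _ = (z1 + z1 * 0) + (z2 * 0 + z2) := by rw [hb1.1, hb2.1, x3, x4]
        _ = z1 + z2 := by simp
    · calc (b1 + b2) * (z1 + z2) * (b1 + b2) = (b1 * z1 + b2 * z2) * (b1 + b2) := by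
            rw [F]
        _ = (b1 * z1 * b1 + b1 * (z1 * b2)) + (b2 * (z2 * b1) + b2 * z2 * b2) := by
            rw [add_mul, mul_add, mul_add]; noncomm_ring
        _ = (b1 + b1 * 0) + (b2 * 0 + b2) := by rw [hb1.2.1, hb2.2.1, x1, x2]
        _ = b1 + b2 := by simp
    · rw [E, star_add, hb1.2.2.1, hb2.2.2.1]
    · rw [F, star_add, hb1.2.2.2, hb2.2.2.2]

lemma mpi_iff_star_mul (hR : IsStarReducing R) {a : R} :
    IsMPInvertible a ↔ IsMPInvertible (star a * a) :=
  ⟨fun ⟨_, hb⟩ => ⟨_, mp_fwd hb⟩, mp_bwd hR⟩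

lemma mpi_iff_mul_star (hR : IsStarReducing R) {a : R} :
    IsMPInvertible a ↔ IsMPInvertible (a * star a) := by
  rw [mpi_star]
  have := mpi_iff_star_mul (R := R) hR (a := star a)
  rwa [star_star] at this

end MPLemmas

theorem stmt_15 {R : Type*} [Ring R] [StarRing R] (hR : IsStarReducing R) (p q : R)
    (hp : IsProjection p) (hq : IsProjection q) :
    IsMPInvertible (p * q - q * p) ↔
      IsMPInvertible (p * q) ∧ IsMPInvertible (p - q) := by
  obtain ⟨hp2, hps⟩ := hp
  obtain ⟨hq2, hqs⟩ := hq
  have hp2' : ∀ x : R, p * (p * x) = p * x := fun x => by rw [← mul_assoc, hp2]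
  have hq2' : ∀ x : R, q * (q * x) = q * x := fun x => by rw [← mul_assoc, hq2]
  -- word identities
  have W1 : star (p * q - q * p) * (p * q - q * p) =
      (p * q * p - p * q * p * (p * q * p)) +
      ((q - p * q - q * p + p * q * p) -
        (q - p * q - q * p + p * q * p) * (q - p * q - q * p + p * q * p)) := by
    simp only [star_sub, star_add, star_mul, star_star, hps, hqs, mul_sub, sub_mul,
      mul_add, add_mul, mul_assoc, hp2, hq2, hp2', hq2']
    abel
  have W2a : p * (p * q * p - p * q * p * (p * q * p)) =
      p * q * p - p * q * p * (p * q * p) := by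
    simp only [mul_sub, sub_mul, mul_add, add_mul, mul_assoc, hp2, hq2, hp2', hq2']
  have W2b : (p * q * p - p * q * p * (p * q * p)) * p =
      p * q * p - p * q * p * (p * q * p) := by
    simp only [mul_sub, sub_mul, mul_add, add_mul, mul_assoc, hp2, hq2, hp2', hq2']
  have W3a : p * ((q - p * q - q * p + p * q * p) -
      (q - p * q - q * p + p * q * p) * (q - p * q - q * p + p * q * p)) = 0 := by
    simp only [mul_sub, sub_mul, mul_add, add_mul, mul_assoc, hp2, hq2, hp2', hq2']
    abel
  have W3b : ((q - p * q - q * p + p * q * p) -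
      (q - p * q - q * p + p * q * p) * (q - p * q - q * p + p * q * p)) * p = 0 := by
    simp only [mul_sub, sub_mul, mul_add, add_mul, mul_assoc, hp2, hq2, hp2', hq2']
    abel
  have W4a : (p * q - p * q * p) * star (p * q - p * q * p) =
      p * q * p - p * q * p * (p * q * p) := by
    simp only [star_sub, star_mul, hps, hqs, mul_sub, sub_mul, mul_add, add_mul,
      mul_assoc, hp2, hq2, hp2', hq2']
    abel
  have W4b : star (p * q - p * q * p) * (p * q - p * q * p) =
      (q - p * q - q * p + p * q * p) -
      (q - p * q - q * p + p * q * p) * (q - p * q - q * p + p * q * p) := by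
    simp only [star_sub, star_mul, hps, hqs, mul_sub, sub_mul, mul_add, add_mul,
      mul_assoc, hp2, hq2, hp2', hq2']
    abel
  have W5 : (p * q) * star (p * q) = p * q * p := by
    simp only [star_mul, hps, hqs, mul_assoc, hp2, hq2, hp2', hq2']
  have W6 : star (p - q) * (p - q) =
      (p - p * q * p) + (q - p * q - q * p + p * q * p) := by
    simp only [star_sub, hps, hqs, mul_sub, sub_mul, mul_assoc, hp2, hq2, hp2', hq2']
    abel
  have W7a : p * (p - p * q * p) = p - p * q * p := by
    simp only [mul_sub, mul_assoc, hp2, hp2']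
  have W7b : (p - p * q * p) * p = p - p * q * p := by
    simp only [sub_mul, mul_assoc, hp2, hq2, hp2', hq2']
  have W7c : p * (q - p * q - q * p + p * q * p) = 0 := by
    simp only [mul_sub, mul_add, mul_assoc, hp2, hq2, hp2', hq2']
    abel
  have W7d : (q - p * q - q * p + p * q * p) * p = 0 := by
    simp only [sub_mul, add_mul, mul_assoc, hp2, hq2, hp2', hq2']
    abel
  have sr : star (p * q * p) = p * q * p := by
    simp only [star_mul, hps, hqs, mul_assoc]
  have spr : star (p - p * q * p) = p - p * q * p := by
    simp only [star_sub, star_mul, hps, hqs, mul_assoc]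
  have sr' : star (q - p * q - q * p + p * q * p) = q - p * q - q * p + p * q * p := by
    simp only [star_sub, star_add, star_mul, hps, hqs, mul_assoc]
    abel
  have Wrp : (p * q * p) * p = p * q * p := by
    simp only [mul_assoc, hp2, hq2, hp2', hq2']
  have W9 : (p - p * q * p) - (p - p * q * p) * (p - p * q * p) =
      p * q * p - p * q * p * (p * q * p) := by
    simp only [mul_sub, sub_mul, mul_assoc, hp2, hq2, hp2', hq2']
    abel
  have Wcomm : (p * q * p) * (p - p * q * p) = (p - p * q * p) * (p * q * p) := by
    simp only [mul_sub, sub_mul, mul_assoc, hp2, hq2, hp2', hq2']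
  have W10 : (p * q * p) * (p - p * q * p) =
      p * q * p - p * q * p * (p * q * p) := by
    simp only [mul_sub, mul_assoc, hp2, hq2, hp2', hq2']
  have hpp2 : (1 - p) * (1 - p) = 1 - p := by
    simp only [mul_sub, sub_mul, mul_one, one_mul, hp2]
    abel
  have hps2 : star ((1 : R) - p) = 1 - p := by
    simp only [star_sub, star_one, hps]
  have Wr'p2 : (q - p * q - q * p + p * q * p) * (1 - p) =
      q - p * q - q * p + p * q * p := by
    rw [mul_sub, mul_one, W7d, sub_zero]
  -- abbreviations for readability of the chain
  have h1 : IsMPInvertible (p * q - q * p) ↔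
      IsMPInvertible ((p * q * p - p * q * p * (p * q * p)) +
      ((q - p * q - q * p + p * q * p) -
        (q - p * q - q * p + p * q * p) * (q - p * q - q * p + p * q * p))) := by
    rw [mpi_iff_star_mul hR, W1]
  have h2 := mp_orth (R := R) hp2 hps W2a W2b W3a W3b
  have hx1 : IsMPInvertible (p * q - p * q * p) ↔
      IsMPInvertible (p * q * p - p * q * p * (p * q * p)) := by
    rw [mpi_iff_mul_star hR, W4a]
  have hx2 : IsMPInvertible (p * q - p * q * p) ↔
      IsMPInvertible ((q - p * q - q * p + p * q * p) -
        (q - p * q - q * p + p * q * p) * (q - p * q - q * p + p * q * p)) := by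
    rw [mpi_iff_star_mul hR, W4b]
  have h4 : IsMPInvertible (p * q) ↔ IsMPInvertible (p * q * p) := by
    rw [mpi_iff_mul_star hR, W5]
  have h5 : IsMPInvertible (p - q) ↔
      IsMPInvertible ((p - p * q * p) + (q - p * q - q * p + p * q * p)) := by
    rw [mpi_iff_star_mul hR, W6]
  have h6 := mp_orth (R := R) hp2 hps W7a W7b W7c W7d
  constructor
  · intro ha
    obtain ⟨hz1, hz2⟩ := h2.mp (h1.mp ha)
    have hr : IsMPInvertible (p * q * p) := mp_factor hp2 hps sr Wrp hz1
    have hpr : IsMPInvertible (p - p * q * p) :=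
      mp_factor hp2 hps spr W7b (by rw [W9]; exact hz1)
    have hr' : IsMPInvertible (q - p * q - q * p + p * q * p) :=
      mp_factor hpp2 hps2 sr' Wr'p2 hz2
    exact ⟨h4.mpr hr, h5.mpr (h6.mpr ⟨hpr, hr'⟩)⟩
  · rintro ⟨hpq, hpmq⟩
    have hr : IsMPInvertible (p * q * p) := h4.mp hpq
    obtain ⟨hpr, hr'⟩ := h6.mp (h5.mp hpmq)
    have hz1 : IsMPInvertible (p * q * p - p * q * p * (p * q * p)) := by
      have := mp_prod sr spr Wcomm hr hpr
      rwa [W10] at this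
    have hz2 := hx2.mp (hx1.mpr hz1)
    exact h1.mpr (h2.mpr ⟨hz1, hz2⟩)
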